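/- arXiv:2605.10684 — 3 statements merged into one kernel-verified Lean document; each statement's English description precedes it below -/
import Mathlib

section
/- If a utility function u is near-modular with bounded noise, i.e., |u(M) − Σ_{i∈M} x_i| ≤ ξ for all M ⊆ N, then for every datum i, |φ_i(u) − x_i| ≤ 2ξ, and consequently for every subset M of size m, |û(M) − u(M)| ≤ (2m+1)ξ. -/
open Finset

/-- The Shapley value of datum `i` in feasible set `N` w.r.t. utility function `u`. -/
noncomputable def shapley {ι : Type*} [DecidableEq ι] (N : Finset ι)
    (u : Finset ι → ℝ) (i : ι) : ℝ :=
  ∑ S ∈ (N.erase i).powerset,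
    (1 / (N.card : ℝ)) * (u (insert i S) - u S) / ((N.card - 1).choose S.card : ℝ)

/-! The Shapley value is a convex combination of the marginal contributions `u (S ∪ {i}) - u S`;
if `u` is `ξ`-close to the modular function `M ↦ ∑ i ∈ M, x i`, each of these is `2ξ`-close
to `x i`, hence so is their average. -/

section Shapley

variable {ι : Type*}

noncomputable def shapleyWeight (N S : Finset ι) : ℝ :=
  1 / (N.card : ℝ) / ((N.card - 1).choose S.card : ℝ)

lemma shapleyWeight_nonneg (N S : Finset ι) : 0 ≤ shapleyWeight N S := by
  unfold shapleyWeight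
  positivity

lemma sum_shapleyWeight [DecidableEq ι] {N : Finset ι} {i : ι} (hi : i ∈ N) :
    ∑ S ∈ (N.erase i).powerset, shapleyWeight N S = 1 := by
  have hn : (N.card : ℝ) ≠ 0 := Nat.cast_ne_zero.mpr (card_pos.mpr ⟨i, hi⟩).ne'
  have hcard : N.card - 1 + 1 = N.card := Nat.sub_add_cancel (card_pos.mpr ⟨i, hi⟩)
  have hlayer : ∀ k ∈ range (N.card - 1 + 1),
      (N.card - 1).choose k • (1 / (N.card : ℝ) / ((N.card - 1).choose k : ℝ)) =
        1 / (N.card : ℝ) := by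
    intro k hk
    have hchoose : ((N.card - 1).choose k : ℝ) ≠ 0 :=
      Nat.cast_ne_zero.mpr (Nat.choose_pos (Nat.lt_succ_iff.mp (mem_range.mp hk))).ne'
    rw [nsmul_eq_mul]
    field_simp
  -- group the subsets by cardinality: there are `choose (n-1) k` of size `k`
  unfold shapleyWeight
  rw [sum_powerset_apply_card (fun k => 1 / (N.card : ℝ) / ((N.card - 1).choose k : ℝ)),
    card_erase_of_mem hi, sum_congr rfl hlayer, sum_const, card_range, hcard, nsmul_eq_mul]
  field_simp

lemma shapley_eq_sum_shapleyWeight_smul [DecidableEq ι] (N : Finset ι) (u : Finset ι → ℝ)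
    (i : ι) :
    shapley N u i =
      ∑ S ∈ (N.erase i).powerset, shapleyWeight N S • (u (insert i S) - u S) := by
  unfold shapley shapleyWeight
  refine sum_congr rfl fun S _ => ?_
  rw [smul_eq_mul]
  ring

lemma abs_shapley_sub_le [DecidableEq ι] {N : Finset ι} {u : Finset ι → ℝ} {i : ι}
    (hi : i ∈ N) {c δ : ℝ}
    (hmarg : ∀ S ∈ (N.erase i).powerset, |u (insert i S) - u S - c| ≤ δ) :
    |shapley N u i - c| ≤ δ := by
  simp only [← Real.dist_eq, ← Metric.mem_closedBall] at hmarg ⊢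
  rw [shapley_eq_sum_shapleyWeight_smul]
  exact (convex_closedBall c δ).sum_mem (fun S _ => shapleyWeight_nonneg N S)
    (sum_shapleyWeight hi) hmarg

lemma abs_marginal_sub_le_of_near_modular [DecidableEq ι] {N : Finset ι} {u : Finset ι → ℝ}
    {x : ι → ℝ} {ξ : ℝ} (hnear : ∀ M ∈ N.powerset, |u M - ∑ i ∈ M, x i| ≤ ξ)
    {i : ι} (hi : i ∈ N) {S : Finset ι} (hS : S ∈ (N.erase i).powerset) :
    |u (insert i S) - u S - x i| ≤ 2 * ξ := by
  rw [mem_powerset] at hS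
  have hSN : S ⊆ N := hS.trans (erase_subset i N)
  have hiS : i ∉ S := fun h => (mem_erase.mp (hS h)).1 rfl
  have hins := hnear _ (mem_powerset.mpr (insert_subset hi hSN))
  have hS' := hnear S (mem_powerset.mpr hSN)
  rw [sum_insert hiS] at hins
  calc |u (insert i S) - u S - x i|
      = |(u (insert i S) - (x i + ∑ j ∈ S, x j)) - (u S - ∑ j ∈ S, x j)| := by ring_nf
    _ ≤ ξ + ξ := (abs_sub _ _).trans (add_le_add hins hS')
    _ = 2 * ξ := by ring

lemma abs_sum_sub_le_of_near_modular {M : Finset ι} {u : Finset ι → ℝ} {x φ : ι → ℝ}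
    {ξ δ : ℝ} (hM : |u M - ∑ i ∈ M, x i| ≤ ξ) (hφ : ∀ i ∈ M, |φ i - x i| ≤ δ) :
    |(∑ i ∈ M, φ i) - u M| ≤ M.card * δ + ξ :=
  calc |(∑ i ∈ M, φ i) - u M|
      = |(∑ i ∈ M, (φ i - x i)) - (u M - ∑ i ∈ M, x i)| := by rw [sum_sub_distrib]; ring_nf
    _ ≤ (∑ i ∈ M, |φ i - x i|) + |u M - ∑ i ∈ M, x i| :=
        (abs_sub _ _).trans (add_le_add_left (abs_sum_le_sum_abs _ _) _)
    _ ≤ M.card * δ + ξ :=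
        add_le_add ((sum_le_card_nsmul M _ δ hφ).trans_eq (nsmul_eq_mul _ _)) hM

end Shapley

theorem shapley_near_modular_general {ι : Type*} [DecidableEq ι] (N : Finset ι)
    (u : Finset ι → ℝ) (x : ι → ℝ) (ξ : ℝ)
    (hnear : ∀ M ∈ N.powerset, |u M - ∑ i ∈ M, x i| ≤ ξ) :
    (∀ i ∈ N, |shapley N u i - x i| ≤ 2 * ξ) ∧
    (∀ M ∈ N.powerset,
      |(∑ i ∈ M, shapley N u i) - u M| ≤ (2 * (M.card : ℝ) + 1) * ξ) := by
  have hφ : ∀ i ∈ N, |shapley N u i - x i| ≤ 2 * ξ := fun i hi =>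
    abs_shapley_sub_le hi fun _ hS => abs_marginal_sub_le_of_near_modular hnear hi hS
  refine ⟨hφ, fun M hM => ?_⟩
  have hMN : M ⊆ N := mem_powerset.mp hM
  calc |(∑ i ∈ M, shapley N u i) - u M|
      ≤ M.card * (2 * ξ) + ξ :=
        abs_sum_sub_le_of_near_modular (hnear M hM) fun i hi => hφ i (hMN hi)
    _ = (2 * (M.card : ℝ) + 1) * ξ := by ring

/-- If `u` is near-modular with bounded noise, `|u(M) − ∑_{i∈M} x_i| ≤ ξ` for all
`M ⊆ N`, then `|φ_i(u) − x_i| ≤ 2ξ` for every `i ∈ N`, and consequently for every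
subset `M ⊆ N` of size `m`, `|û(M) − u(M)| ≤ (2m+1)ξ`, where `û(M) = ∑_{i∈M} φ_i(u)`. -/
theorem shapley_near_modular {ι : Type*} [DecidableEq ι] (N : Finset ι)
    (u : Finset ι → ℝ) (x : ι → ℝ) (ξ : ℝ) (hξ : 0 ≤ ξ)
    (hnear : ∀ M ∈ N.powerset, |u M - ∑ i ∈ M, x i| ≤ ξ) :
    (∀ i ∈ N, |shapley N u i - x i| ≤ 2 * ξ) ∧
    (∀ M ∈ N.powerset,
      |(∑ i ∈ M, shapley N u i) - u M| ≤ (2 * (M.card : ℝ) + 1) * ξ) :=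
  shapley_near_modular_general N u x ξ hnear
end

section
/- Under the Consistent Player assumption, both the actual utility and the sum of Shapley values, written as functions of the reparameterized indicator variables Z_i (where Z_i = 1 means including i if g_i = +1, or excluding i if g_i = −1), are monotone nondecreasing in each Z_i. -/
open Finset
open scoped Classical

/-- The reparameterized subset `M(Z)`: datum `i ∈ N` is in `M(Z)` iff `Z_i = 1` and
`g_i = +1`, or `Z_i = 0` and `g_i = −1`. -/
noncomputable def reparamSet {ι : Type*} [DecidableEq ι] (N : Finset ι)
    (g : ι → ℝ) (Z : ι → Bool) : Finset ι :=
  N.filter (fun j => (Z j = true ∧ g j = 1) ∨ (Z j = false ∧ g j = -1))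

/-- Under the Consistent Player assumption, both the actual utility
`U(Z) = u(M(Z))` and the sum of Shapley values `Û(Z) = ∑_{i∈M(Z)} φ_i(u)` are
monotone nondecreasing in each coordinate `Z_i`: flipping any `Z_i` from 0 to 1
does not decrease `U(Z)` or `Û(Z)`. -/
theorem monotone_reparam_consistent_player {ι : Type*} [DecidableEq ι] (N : Finset ι)
    (u : Finset ι → ℝ) (hval : ∀ S, u S = 0 ∨ u S = 1) (h0 : u ∅ = 0)
    (g : ι → ℝ) (hg : ∀ i ∈ N, g i = 1 ∨ g i = -1)
    (hcons : ∀ i ∈ N, ∀ S ∈ (N.erase i).powerset,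
      u (insert i S) - u S = 0 ∨ u (insert i S) - u S = g i) :
    ∀ (Z : ι → Bool) (i : ι), i ∈ N → Z i = false →
      u (reparamSet N g Z) ≤ u (reparamSet N g (Function.update Z i true)) ∧
      (∑ j ∈ reparamSet N g Z, shapley N u j) ≤
        (∑ j ∈ reparamSet N g (Function.update Z i true), shapley N u j) := by
  intro Z i hiN hZi
  set M := reparamSet N g Z with hM
  have hMsub : M ⊆ N := filter_subset _ _
  have hshap_nonneg : g i = 1 → 0 ≤ shapley N u i := by
    intro hgi
    apply sum_nonneg
    intro S hS
    rcases hcons i hiN S hS with h | h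
    · rw [h]; simp
    · rw [hgi] at h; rw [h]; positivity
  have hshap_nonpos : g i = -1 → shapley N u i ≤ 0 := by
    intro hgi
    apply sum_nonpos
    intro S hS
    rcases hcons i hiN S hS with h | h
    · rw [h]; simp
    · rw [hgi] at h; rw [h]
      have hx : 1 / (N.card : ℝ) * (-1) / ((N.card - 1).choose S.card : ℝ)
          = -(1 / (N.card : ℝ) / ((N.card - 1).choose S.card : ℝ)) := by ring
      have hy : (0:ℝ) ≤ 1 / (N.card : ℝ) / ((N.card - 1).choose S.card : ℝ) := by
        positivity
      linarith
  rcases hg i hiN with hgi | hgi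
  · -- g i = 1
    have hiM : i ∉ M := by
      rw [hM, reparamSet]
      simp only [mem_filter, hZi, hgi]
      norm_num
    have hM' : reparamSet N g (Function.update Z i true) = insert i M := by
      ext j
      by_cases hj : j = i
      · subst hj
        simp [reparamSet, Function.update_self, hgi, hiN]
      · simp only [reparamSet, Function.update_of_ne hj, mem_filter, mem_insert, hj,
          false_or, hM]
    have hMpow : M ∈ (N.erase i).powerset :=
      mem_powerset.2 fun j hj => mem_erase.2 ⟨by rintro rfl; exact hiM hj, hMsub hj⟩
    constructor
    · rw [hM']
      rcases hcons i hiN M hMpow with h | h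
      · linarith
      · rw [hgi] at h; linarith
    · rw [hM', sum_insert hiM]
      have := hshap_nonneg hgi
      linarith
  · -- g i = -1
    have hiM : i ∈ M := by
      rw [hM, reparamSet]
      simp [hZi, hgi, hiN]
    have hM' : reparamSet N g (Function.update Z i true) = M.erase i := by
      ext j
      by_cases hj : j = i
      · subst hj
        simp only [reparamSet, Function.update_self, mem_filter, mem_erase]
        norm_num [hgi]
      · simp only [reparamSet, Function.update_of_ne hj, mem_filter, mem_erase, hM]
        tauto
    have hins : insert i (M.erase i) = M := insert_erase hiM
    have hpow : M.erase i ∈ (N.erase i).powerset :=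
      mem_powerset.2 fun j hj => by
        rcases mem_erase.1 hj with ⟨hji, hjM⟩
        exact mem_erase.2 ⟨hji, hMsub hjM⟩
    constructor
    · rw [hM']
      rcases hcons i hiN (M.erase i) hpow with h | h
      · rw [hins] at h; linarith
      · rw [hgi, hins] at h; linarith
    · rw [hM']
      have hsum : ∑ j ∈ M, shapley N u j
          = shapley N u i + ∑ j ∈ M.erase i, shapley N u j := by
        rw [← sum_insert (notMem_erase i M), hins]
      have := hshap_nonpos hgi
      linarith
end

section
/- Under the Consistent Player assumption, with M^I a random subset including each element independently with probability p ∈ (0,1), if both events {u(M^I)=0} and {u(M^I)=1} have positive probability, then E[û(M^I) | u(M^I)=0] ≤ E[û(M^I) | u(M^I)=1], with equality only if φ_i(u) = 0 for all i ∈ N. -/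
open Finset
open scoped Classical

/-- Probability that the random subset `M^I` (each element of `N` included
independently with probability `p`) equals `M`. -/
noncomputable def subsetProb {ι : Type*} (N : Finset ι) (p : ℝ) (M : Finset ι) : ℝ :=
  p ^ M.card * (1 - p) ^ (N.card - M.card)

/-- Conditional expectation `E[∑_{i∈M^I} φ_i(u) ∣ u(M^I) = b]` for the random
subset `M^I` of `N`. -/
noncomputable def condExpShapSum {ι : Type*} [DecidableEq ι] (N : Finset ι)
    (u : Finset ι → ℝ) (p : ℝ) (b : ℝ) : ℝ :=
  (∑ M ∈ N.powerset.filter (fun M => u M = b),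
      subsetProb N p M * ∑ i ∈ M, shapley N u i) /
    (∑ M ∈ N.powerset.filter (fun M => u M = b), subsetProb N p M)

section Aux
set_option linter.unusedSectionVars false
variable {ι : Type*} [DecidableEq ι]

lemma subsetProb_pos (N : Finset ι) {p : ℝ} (hp0 : 0 < p) (hp1 : p < 1) (M : Finset ι) :
    0 < subsetProb N p M :=
  mul_pos (pow_pos hp0 _) (pow_pos (by linarith) _)

lemma subsetProb_erase (N : Finset ι) (p : ℝ) {i : ι} {M : Finset ι}
    (hi : i ∈ N) (hM : M ⊆ N.erase i) :
    subsetProb N p M = (1 - p) * subsetProb (N.erase i) p M ∧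
    subsetProb N p (insert i M) = p * subsetProb (N.erase i) p M := by
  have hiM : i ∉ M := fun h => (Finset.notMem_erase i N) (hM h)
  have hc : (N.erase i).card = N.card - 1 := Finset.card_erase_of_mem hi
  have hMc : M.card ≤ N.card - 1 := hc ▸ Finset.card_le_card hM
  have h1 : 1 ≤ N.card := Finset.card_pos.mpr ⟨i, hi⟩
  constructor
  · unfold subsetProb
    rw [hc, show N.card - M.card = (N.card - 1 - M.card) + 1 by omega, pow_succ]
    ring
  · unfold subsetProb
    rw [hc, Finset.card_insert_of_notMem hiM,
      show N.card - (M.card + 1) = N.card - 1 - M.card by omega, pow_succ]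
    ring

lemma filter_inst {α : Type*} (p : α → Prop) [DecidablePred p] (d2 : DecidablePred p)
    (s : Finset α) : @Finset.filter α p d2 s = Finset.filter p s := by
  congr!

lemma sum_powerset_split (N : Finset ι) {i : ι} (hi : i ∈ N) (f : Finset ι → ℝ) :
    ∑ M ∈ N.powerset, f M
      = ∑ M ∈ (N.erase i).powerset, f M + ∑ M ∈ (N.erase i).powerset, f (insert i M) := by
  have h := Finset.sum_powerset_insert (Finset.notMem_erase i N) f
  rwa [Finset.insert_erase hi] at h

set_option maxHeartbeats 1000000 in
/-- Per-player key inequality, positive-player case. -/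
lemma T_key_pos (N : Finset ι) (u : Finset ι → ℝ) (hval : ∀ S, u S = 0 ∨ u S = 1)
    {i : ι} (hi : i ∈ N)
    (hconsi : ∀ S ∈ (N.erase i).powerset,
      u (insert i S) - u S = 0 ∨ u (insert i S) - u S = 1)
    (p : ℝ) (hp0 : 0 < p) (hp1 : p < 1) :
    0 ≤ shapley N u i ∧
    0 ≤ (∑ M ∈ N.powerset.filter (fun M => u M = 1 ∧ i ∈ M), subsetProb N p M) *
          (∑ M ∈ N.powerset.filter (fun M => u M = 0), subsetProb N p M) -
        (∑ M ∈ N.powerset.filter (fun M => u M = 0 ∧ i ∈ M), subsetProb N p M) *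
          (∑ M ∈ N.powerset.filter (fun M => u M = 1), subsetProb N p M) ∧
    (shapley N u i ≠ 0 →
      0 < (∑ M ∈ N.powerset.filter (fun M => u M = 1 ∧ i ∈ M), subsetProb N p M) *
            (∑ M ∈ N.powerset.filter (fun M => u M = 0), subsetProb N p M) -
          (∑ M ∈ N.powerset.filter (fun M => u M = 0 ∧ i ∈ M), subsetProb N p M) *
            (∑ M ∈ N.powerset.filter (fun M => u M = 1), subsetProb N p M)) := by
  classical
  have hup : ∀ M ∈ (N.erase i).powerset, u M = 1 → u (insert i M) = 1 := by
    intro M hM h1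
    rcases hconsi M hM with h | h
    · linarith
    · rcases hval (insert i M) with h' | h' <;> linarith
  have hdown : ∀ M ∈ (N.erase i).powerset, u (insert i M) = 0 → u M = 0 := by
    intro M hM h1
    rcases hconsi M hM with h | h
    · linarith
    · rcases hval M with h' | h' <;> linarith
  have hiE : i ∉ N.erase i := Finset.notMem_erase i N
  -- abbreviations
  set q : Finset ι → ℝ := subsetProb (N.erase i) p with hq
  -- split identities on the small powerset
  have hsplit0 :
      (∑ M ∈ (N.erase i).powerset.filter (fun M => u M = 0), q M)
        = (∑ M ∈ (N.erase i).powerset.filter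
            (fun M => u M = 0 ∧ u (insert i M) = 1), q M)
          + ∑ M ∈ (N.erase i).powerset.filter (fun M => u (insert i M) = 0), q M := by
    rw [← Finset.sum_filter_add_sum_filter_not
      ((N.erase i).powerset.filter (fun M => u M = 0)) (fun M => u (insert i M) = 1) q,
      Finset.filter_filter, Finset.filter_filter]
    congr 1
    refine Finset.sum_congr (Finset.filter_congr fun M hM => ?_) fun _ _ => rfl
    constructor
    · rintro ⟨h1, h2⟩
      rcases hval (insert i M) with h | h
      · exact h
      · exact absurd h h2
    · intro h
      exact ⟨hdown M hM h, by rw [h]; norm_num⟩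
  have hsplit1 :
      (∑ M ∈ (N.erase i).powerset.filter (fun M => u (insert i M) = 1), q M)
        = (∑ M ∈ (N.erase i).powerset.filter (fun M => u M = 1), q M)
          + ∑ M ∈ (N.erase i).powerset.filter
              (fun M => u M = 0 ∧ u (insert i M) = 1), q M := by
    rw [← Finset.sum_filter_add_sum_filter_not
      ((N.erase i).powerset.filter (fun M => u (insert i M) = 1)) (fun M => u M = 1) q,
      Finset.filter_filter, Finset.filter_filter]
    congr 1
    · refine Finset.sum_congr (Finset.filter_congr fun M hM => ?_) fun _ _ => rfl
      constructor
      · rintro ⟨_, h2⟩; exact h2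
      · intro h; exact ⟨hup M hM h, h⟩
    · refine Finset.sum_congr (Finset.filter_congr fun M hM => ?_) fun _ _ => rfl
      constructor
      · rintro ⟨h1, h2⟩
        rcases hval M with h | h
        · exact ⟨h, h1⟩
        · exact absurd h h2
      · rintro ⟨h1, h2⟩; exact ⟨h2, by rw [h1]; norm_num⟩
  have hw1 : ∀ M ∈ (N.erase i).powerset, subsetProb N p M = (1 - p) * q M := fun M hM =>
    (subsetProb_erase N p hi (Finset.mem_powerset.mp hM)).1
  have hw2 : ∀ M ∈ (N.erase i).powerset, subsetProb N p (insert i M) = p * q M := fun M hM =>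
    (subsetProb_erase N p hi (Finset.mem_powerset.mp hM)).2
  have key : ∀ P : Finset ι → Prop,
      (∑ M ∈ N.powerset.filter (fun M => P M), subsetProb N p M)
        = (1 - p) * (∑ M ∈ (N.erase i).powerset.filter (fun M => P M), q M)
          + p * (∑ M ∈ (N.erase i).powerset.filter (fun M => P (insert i M)), q M) := by
    intro P
    rw [Finset.sum_filter, sum_powerset_split N hi, Finset.mul_sum, Finset.mul_sum,
      Finset.sum_filter, Finset.sum_filter]
    congr 1
    · refine Finset.sum_congr rfl fun M hM => ?_
      split
      · exact hw1 M hM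
      · rfl
    · refine Finset.sum_congr rfl fun M hM => ?_
      split
      · exact hw2 M hM
      · rfl
  have hW0 : (∑ M ∈ N.powerset.filter (fun M => u M = 0), subsetProb N p M)
      = (1 - p) * (∑ M ∈ (N.erase i).powerset.filter (fun M => u M = 0), q M)
        + p * (∑ M ∈ (N.erase i).powerset.filter (fun M => u (insert i M) = 0), q M) :=
    key (fun M => u M = 0)
  have hW1 : (∑ M ∈ N.powerset.filter (fun M => u M = 1), subsetProb N p M)
      = (1 - p) * (∑ M ∈ (N.erase i).powerset.filter (fun M => u M = 1), q M)
        + p * (∑ M ∈ (N.erase i).powerset.filter (fun M => u (insert i M) = 1), q M) :=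
    key (fun M => u M = 1)
  have hP0 : (∑ M ∈ N.powerset.filter (fun M => u M = 0 ∧ i ∈ M), subsetProb N p M)
      = (1 - p) * (∑ M ∈ (N.erase i).powerset.filter (fun M => u M = 0 ∧ i ∈ M), q M)
        + p * (∑ M ∈ (N.erase i).powerset.filter
            (fun M => u (insert i M) = 0 ∧ i ∈ insert i M), q M) := by
    have h := key (fun M => u M = 0 ∧ i ∈ M)
    convert h using 6
  have hP1 : (∑ M ∈ N.powerset.filter (fun M => u M = 1 ∧ i ∈ M), subsetProb N p M)
      = (1 - p) * (∑ M ∈ (N.erase i).powerset.filter (fun M => u M = 1 ∧ i ∈ M), q M)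
        + p * (∑ M ∈ (N.erase i).powerset.filter
            (fun M => u (insert i M) = 1 ∧ i ∈ insert i M), q M) := by
    have h := key (fun M => u M = 1 ∧ i ∈ M)
    convert h using 6
  have e0 : (N.erase i).powerset.filter (fun M => u M = 0 ∧ i ∈ M) = ∅ :=
    Finset.filter_false_of_mem fun M hM h =>
      hiE (Finset.mem_powerset.mp hM h.2)
  have e1 : (N.erase i).powerset.filter (fun M => u M = 1 ∧ i ∈ M) = ∅ :=
    Finset.filter_false_of_mem fun M hM h =>
      hiE (Finset.mem_powerset.mp hM h.2)
  have e2 : (N.erase i).powerset.filter (fun M => u (insert i M) = 0 ∧ i ∈ insert i M)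
      = (N.erase i).powerset.filter (fun M => u (insert i M) = 0) :=
    Finset.filter_congr fun M _ => by simp
  have e3 : (N.erase i).powerset.filter (fun M => u (insert i M) = 1 ∧ i ∈ insert i M)
      = (N.erase i).powerset.filter (fun M => u (insert i M) = 1) :=
    Finset.filter_congr fun M _ => by simp
  rw [e0, e2] at hP0
  rw [e1, e3] at hP1
  simp only [Finset.sum_empty, mul_zero, zero_add] at hP0 hP1
  -- name the four basic quantities
  have hqpos : ∀ M, 0 < q M := subsetProb_pos (N.erase i) hp0 hp1
  have hA1n : 0 ≤ ∑ M ∈ (N.erase i).powerset.filter (fun M => u M = 1), q M :=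
    Finset.sum_nonneg fun M _ => (hqpos M).le
  have hB0n : 0 ≤ ∑ M ∈ (N.erase i).powerset.filter (fun M => u (insert i M) = 0), q M :=
    Finset.sum_nonneg fun M _ => (hqpos M).le
  have hbbn : 0 ≤ ∑ M ∈ (N.erase i).powerset.filter
      (fun M => u M = 0 ∧ u (insert i M) = 1), q M :=
    Finset.sum_nonneg fun M _ => (hqpos M).le
  have hT : (∑ M ∈ N.powerset.filter (fun M => u M = 1 ∧ i ∈ M), subsetProb N p M) *
          (∑ M ∈ N.powerset.filter (fun M => u M = 0), subsetProb N p M) -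
        (∑ M ∈ N.powerset.filter (fun M => u M = 0 ∧ i ∈ M), subsetProb N p M) *
          (∑ M ∈ N.powerset.filter (fun M => u M = 1), subsetProb N p M)
      = p * (1 - p) *
          (∑ M ∈ (N.erase i).powerset.filter (fun M => u M = 0 ∧ u (insert i M) = 1), q M) *
          ((∑ M ∈ (N.erase i).powerset.filter (fun M => u M = 1), q M)
            + (∑ M ∈ (N.erase i).powerset.filter (fun M => u (insert i M) = 0), q M)
            + (∑ M ∈ (N.erase i).powerset.filter
                (fun M => u M = 0 ∧ u (insert i M) = 1), q M)) := by
    rw [hW0, hW1, hP0, hP1, hsplit0, hsplit1]; ring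
  have h1p : (0:ℝ) < 1 - p := by linarith
  have hmarg : ∀ S ∈ (N.erase i).powerset, 0 ≤ u (insert i S) - u S := by
    intro S hS
    rcases hconsi S hS with h | h <;> linarith
  have hshap : 0 ≤ shapley N u i := by
    apply Finset.sum_nonneg
    intro S hS
    apply div_nonneg _ (Nat.cast_nonneg _)
    exact mul_nonneg (by positivity) (hmarg S hS)
  refine ⟨hshap, ?_, ?_⟩
  · rw [hT]
    have := mul_nonneg (mul_nonneg (mul_pos hp0 h1p).le hbbn)
      (by linarith : (0:ℝ) ≤ (∑ M ∈ (N.erase i).powerset.filter (fun M => u M = 1), q M)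
        + (∑ M ∈ (N.erase i).powerset.filter (fun M => u (insert i M) = 0), q M)
        + (∑ M ∈ (N.erase i).powerset.filter
            (fun M => u M = 0 ∧ u (insert i M) = 1), q M))
    linarith
  · intro hne
    have hex : ∃ S ∈ (N.erase i).powerset, u (insert i S) - u S ≠ 0 := by
      by_contra hc
      push_neg at hc
      apply hne
      apply Finset.sum_eq_zero
      intro S hS
      rw [hc S hS]
      simp
    obtain ⟨S, hS, hSne⟩ := hex
    have hS1 : u (insert i S) - u S = 1 := (hconsi S hS).resolve_left hSne
    have hmem : S ∈ (N.erase i).powerset.filter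
        (fun M => u M = 0 ∧ u (insert i M) = 1) := by
      rw [Finset.mem_filter]
      refine ⟨hS, ?_, ?_⟩
      · rcases hval S with h | h
        · exact h
        · rcases hval (insert i S) with h' | h' <;> linarith
      · rcases hval (insert i S) with h' | h'
        · rcases hval S with h | h <;> linarith
        · exact h'
    have hbpos : 0 < ∑ M ∈ (N.erase i).powerset.filter
        (fun M => u M = 0 ∧ u (insert i M) = 1), q M :=
      Finset.sum_pos (fun M _ => hqpos M) ⟨S, hmem⟩
    rw [hT]
    have := mul_pos (mul_pos (mul_pos hp0 h1p) hbpos)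
      (by linarith : (0:ℝ) < (∑ M ∈ (N.erase i).powerset.filter (fun M => u M = 1), q M)
        + (∑ M ∈ (N.erase i).powerset.filter (fun M => u (insert i M) = 0), q M)
        + (∑ M ∈ (N.erase i).powerset.filter
            (fun M => u M = 0 ∧ u (insert i M) = 1), q M))
    linarith

lemma shapley_neg (N : Finset ι) (u : Finset ι → ℝ) (i : ι) :
    shapley N (fun S => 1 - u S) i = - shapley N u i := by
  unfold shapley
  rw [← Finset.sum_neg_distrib]
  refine Finset.sum_congr rfl fun S _ => ?_
  ring

set_option maxHeartbeats 1000000 in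
/-- Per-player key inequality, general sign. -/
lemma T_key (N : Finset ι) (u : Finset ι → ℝ) (hval : ∀ S, u S = 0 ∨ u S = 1)
    {i : ι} (hi : i ∈ N) {gi : ℝ} (hgi : gi = 1 ∨ gi = -1)
    (hconsi : ∀ S ∈ (N.erase i).powerset,
      u (insert i S) - u S = 0 ∨ u (insert i S) - u S = gi)
    (p : ℝ) (hp0 : 0 < p) (hp1 : p < 1) :
    0 ≤ shapley N u i *
        ((∑ M ∈ N.powerset.filter (fun M => u M = 1 ∧ i ∈ M), subsetProb N p M) *
          (∑ M ∈ N.powerset.filter (fun M => u M = 0), subsetProb N p M) -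
        (∑ M ∈ N.powerset.filter (fun M => u M = 0 ∧ i ∈ M), subsetProb N p M) *
          (∑ M ∈ N.powerset.filter (fun M => u M = 1), subsetProb N p M)) ∧
    (shapley N u i ≠ 0 →
      0 < shapley N u i *
        ((∑ M ∈ N.powerset.filter (fun M => u M = 1 ∧ i ∈ M), subsetProb N p M) *
          (∑ M ∈ N.powerset.filter (fun M => u M = 0), subsetProb N p M) -
        (∑ M ∈ N.powerset.filter (fun M => u M = 0 ∧ i ∈ M), subsetProb N p M) *
          (∑ M ∈ N.powerset.filter (fun M => u M = 1), subsetProb N p M))) := by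
  rcases hgi with hgi | hgi
  · subst hgi
    obtain ⟨h1, h2, h3⟩ := T_key_pos N u hval hi hconsi p hp0 hp1
    exact ⟨mul_nonneg h1 h2,
      fun hne => mul_pos (lt_of_le_of_ne h1 (Ne.symm hne)) (h3 hne)⟩
  · subst hgi
    have hvval : ∀ S, (fun S => 1 - u S) S = 0 ∨ (fun S => 1 - u S) S = 1 := by
      intro S
      rcases hval S with h | h
      · right; simp [h]
      · left; simp [h]
    have hvcons : ∀ S ∈ (N.erase i).powerset,
        (fun S => 1 - u S) (insert i S) - (fun S => 1 - u S) S = 0 ∨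
        (fun S => 1 - u S) (insert i S) - (fun S => 1 - u S) S = 1 := by
      intro S hS
      rcases hconsi S hS with h | h
      · left; simp only; linarith
      · right; simp only; linarith
    obtain ⟨h1, h2, h3⟩ := T_key_pos N (fun S => 1 - u S) hvval hi hvcons p hp0 hp1
    rw [shapley_neg N u i] at h1 h3
    have f1 : N.powerset.filter (fun M => (fun S => 1 - u S) M = 1 ∧ i ∈ M)
        = N.powerset.filter (fun M => u M = 0 ∧ i ∈ M) := by
      apply Finset.filter_congr
      intro M _
      simp only
      constructor
      · rintro ⟨h, h'⟩; exact ⟨by linarith, h'⟩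
      · rintro ⟨h, h'⟩; exact ⟨by linarith, h'⟩
    have f2 : N.powerset.filter (fun M => (fun S => 1 - u S) M = 0 ∧ i ∈ M)
        = N.powerset.filter (fun M => u M = 1 ∧ i ∈ M) := by
      apply Finset.filter_congr
      intro M _
      simp only
      constructor
      · rintro ⟨h, h'⟩; exact ⟨by linarith, h'⟩
      · rintro ⟨h, h'⟩; exact ⟨by linarith, h'⟩
    have f3 : N.powerset.filter (fun M => (fun S => 1 - u S) M = 1)
        = N.powerset.filter (fun M => u M = 0) := by
      apply Finset.filter_congr
      intro M _
      simp only
      constructor <;> (intro h; linarith)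
    have f4 : N.powerset.filter (fun M => (fun S => 1 - u S) M = 0)
        = N.powerset.filter (fun M => u M = 1) := by
      apply Finset.filter_congr
      intro M _
      simp only
      constructor <;> (intro h; linarith)
    rw [f1, f2, f3, f4] at h2 h3
    constructor
    · nlinarith [mul_nonneg h1 h2]
    · intro hne
      have hφ : 0 < - shapley N u i :=
        lt_of_le_of_ne h1 (by simpa using fun h => hne (by linarith))
      have hT := h3 (by intro h; apply hne; linarith)
      nlinarith [mul_pos hφ hT]

/-- swap the double sum -/
lemma swap_sum (N : Finset ι) (F : Finset (Finset ι)) (hF : F ⊆ N.powerset)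
    (w : Finset ι → ℝ) (φ : ι → ℝ) :
    ∑ M ∈ F, w M * ∑ i ∈ M, φ i
      = ∑ i ∈ N, φ i * ∑ M ∈ F.filter (fun M => i ∈ M), w M := by
  have h1 : ∀ M ∈ F, w M * ∑ i ∈ M, φ i
      = ∑ i ∈ N, (if i ∈ M then w M * φ i else 0) := by
    intro M hM
    rw [Finset.sum_ite_mem, Finset.inter_eq_right.mpr (Finset.mem_powerset.mp (hF hM)),
      Finset.mul_sum]
  rw [Finset.sum_congr rfl h1, Finset.sum_comm]
  refine Finset.sum_congr rfl fun i _ => ?_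
  rw [Finset.mul_sum, Finset.sum_filter]
  refine Finset.sum_congr rfl fun M _ => ?_
  split <;> ring

end Aux

/-- Under the Consistent Player assumption, with `M^I` a random subset including each
element independently with probability `p ∈ (0,1)`, if both events `{u(M^I)=0}` and
`{u(M^I)=1}` have positive probability, then
`E[û(M^I) | u(M^I)=0] ≤ E[û(M^I) | u(M^I)=1]`, with equality only if all Shapley
values vanish. -/
theorem condExp_separation_consistent_player {ι : Type*} [DecidableEq ι] (N : Finset ι)
    (u : Finset ι → ℝ) (hval : ∀ S, u S = 0 ∨ u S = 1) (h0 : u ∅ = 0)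
    (g : ι → ℝ) (hg : ∀ i ∈ N, g i = 1 ∨ g i = -1)
    (hcons : ∀ i ∈ N, ∀ S ∈ (N.erase i).powerset,
      u (insert i S) - u S = 0 ∨ u (insert i S) - u S = g i)
    (p : ℝ) (hp0 : 0 < p) (hp1 : p < 1)
    (hpos0 : 0 < ∑ M ∈ N.powerset.filter (fun M => u M = 0), subsetProb N p M)
    (hpos1 : 0 < ∑ M ∈ N.powerset.filter (fun M => u M = 1), subsetProb N p M) :
    condExpShapSum N u p 0 ≤ condExpShapSum N u p 1 ∧
    (condExpShapSum N u p 0 = condExpShapSum N u p 1 →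
      ∀ i ∈ N, shapley N u i = 0) := by
  classical
  have hswap : ∀ b : ℝ,
      (∑ M ∈ N.powerset.filter (fun M => u M = b),
        subsetProb N p M * ∑ i ∈ M, shapley N u i)
        = ∑ i ∈ N, shapley N u i *
            ∑ M ∈ N.powerset.filter (fun M => u M = b ∧ i ∈ M), subsetProb N p M := by
    intro b
    rw [swap_sum N _ (Finset.filter_subset _ _)]
    refine Finset.sum_congr rfl fun i _ => ?_
    have hff : (N.powerset.filter (fun M => u M = b)).filter (fun M => i ∈ M)
        = N.powerset.filter (fun M => u M = b ∧ i ∈ M) := by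
      ext M
      simp only [Finset.mem_filter]
      tauto
    rw [hff]
  have hΔ : (∑ M ∈ N.powerset.filter (fun M => u M = 1),
        subsetProb N p M * ∑ i ∈ M, shapley N u i) *
          (∑ M ∈ N.powerset.filter (fun M => u M = 0), subsetProb N p M)
      - (∑ M ∈ N.powerset.filter (fun M => u M = 0),
          subsetProb N p M * ∑ i ∈ M, shapley N u i) *
          (∑ M ∈ N.powerset.filter (fun M => u M = 1), subsetProb N p M)
      = ∑ i ∈ N, shapley N u i *
          ((∑ M ∈ N.powerset.filter (fun M => u M = 1 ∧ i ∈ M), subsetProb N p M) *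
            (∑ M ∈ N.powerset.filter (fun M => u M = 0), subsetProb N p M) -
          (∑ M ∈ N.powerset.filter (fun M => u M = 0 ∧ i ∈ M), subsetProb N p M) *
            (∑ M ∈ N.powerset.filter (fun M => u M = 1), subsetProb N p M)) := by
    rw [hswap 0, hswap 1, Finset.sum_mul, Finset.sum_mul, ← Finset.sum_sub_distrib]
    exact Finset.sum_congr rfl fun i _ => by ring
  have hterm := fun i (hi : i ∈ N) =>
    T_key N u hval hi (hg i hi) (hcons i hi) p hp0 hp1
  have hsum_nonneg : 0 ≤ ∑ i ∈ N, shapley N u i *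
      ((∑ M ∈ N.powerset.filter (fun M => u M = 1 ∧ i ∈ M), subsetProb N p M) *
        (∑ M ∈ N.powerset.filter (fun M => u M = 0), subsetProb N p M) -
      (∑ M ∈ N.powerset.filter (fun M => u M = 0 ∧ i ∈ M), subsetProb N p M) *
        (∑ M ∈ N.powerset.filter (fun M => u M = 1), subsetProb N p M)) :=
    Finset.sum_nonneg fun i hi => (hterm i hi).1
  constructor
  · unfold condExpShapSum
    rw [div_le_div_iff₀ hpos0 hpos1]
    linarith [hΔ, hsum_nonneg]
  · intro heq i hi
    unfold condExpShapSum at heq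
    rw [div_eq_div_iff hpos0.ne' hpos1.ne'] at heq
    have hzero : (∑ i ∈ N, shapley N u i *
        ((∑ M ∈ N.powerset.filter (fun M => u M = 1 ∧ i ∈ M), subsetProb N p M) *
          (∑ M ∈ N.powerset.filter (fun M => u M = 0), subsetProb N p M) -
        (∑ M ∈ N.powerset.filter (fun M => u M = 0 ∧ i ∈ M), subsetProb N p M) *
          (∑ M ∈ N.powerset.filter (fun M => u M = 1), subsetProb N p M))) = 0 := by
      linarith [hΔ]
    have hall := (Finset.sum_eq_zero_iff_of_nonneg
      (fun i hi => (hterm i hi).1)).mp hzero i hi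
    by_contra hne
    have := (hterm i hi).2 hne
    linarith
end
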